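/- If random variables X1, X2, Y, X̂1, X̂2, Ŝ satisfy the Markov chain X1 − Y − X2 (i.e., I(X1; X2 | Y) = 0), then I(X1, X2; X̂1, X̂2, Ŝ | Y) ≥ I(X1; X̂1, Ŝ | Y) + I(X2; X̂2 | Y). -/

import Mathlib

open scoped BigOperators
set_option linter.unusedSectionVars false
/-- Joint pmf of `(fA, fB, fC)` induced by a pmf `μ` on a finite sample space. -/
noncomputable def jointP {Ω α β γ : Type*} [Fintype Ω]
    [DecidableEq α] [DecidableEq β] [DecidableEq γ]
    (μ : Ω → ℝ) (fA : Ω → α) (fB : Ω → β) (fC : Ω → γ) (a : α) (b : β) (c : γ) : ℝ :=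
  ∑ ω, if fA ω = a ∧ fB ω = b ∧ fC ω = c then μ ω else 0

/-- Conditional mutual information `I(A; B | C)` (base-2) of finite random variables. -/
noncomputable def cmi {Ω α β γ : Type*} [Fintype Ω] [Fintype α] [Fintype β] [Fintype γ]
    [DecidableEq α] [DecidableEq β] [DecidableEq γ]
    (μ : Ω → ℝ) (fA : Ω → α) (fB : Ω → β) (fC : Ω → γ) : ℝ :=
  ∑ a, ∑ b, ∑ c,
    jointP μ fA fB fC a b c *
      Real.logb 2 (jointP μ fA fB fC a b c * (∑ a', ∑ b', jointP μ fA fB fC a' b' c) /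
        ((∑ b', jointP μ fA fB fC a b' c) * (∑ a', jointP μ fA fB fC a' b c)))


section Aux
variable {Ω : Type*} [Fintype Ω]

open Classical in
noncomputable def pr (μ : Ω → ℝ) (E : Ω → Prop) : ℝ := ∑ ω, if E ω then μ ω else 0

open Classical

lemma pr_congr (μ : Ω → ℝ) {E F : Ω → Prop} (h : ∀ ω, E ω ↔ F ω) : pr μ E = pr μ F := by
  unfold pr; exact Finset.sum_congr rfl fun ω _ => by simp only [h ω]

lemma pr_nonneg (μ : Ω → ℝ) (h0 : ∀ ω, 0 ≤ μ ω) (E : Ω → Prop) : 0 ≤ pr μ E :=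
  Finset.sum_nonneg fun ω _ => by split_ifs; exacts [h0 ω, le_refl 0]

lemma le_pr (μ : Ω → ℝ) (h0 : ∀ ω, 0 ≤ μ ω) {E : Ω → Prop} (ω0 : Ω) (hE : E ω0) :
    μ ω0 ≤ pr μ E := by
  have := Finset.single_le_sum (f := fun ω => if E ω then μ ω else 0)
    (fun ω _ => by split_ifs; exacts [h0 ω, le_refl 0]) (Finset.mem_univ ω0)
  simpa [pr, hE] using this

lemma pr_fiber_sum (μ : Ω → ℝ) {β : Type*} [Fintype β] (f : Ω → β) (E : Ω → Prop) :
    ∑ b, pr μ (fun ω => E ω ∧ f ω = b) = pr μ E := by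
  unfold pr
  rw [Finset.sum_comm]
  refine Finset.sum_congr rfl fun ω _ => ?_
  by_cases h : E ω <;> simp [h]

lemma sum_fiber (μ : Ω → ℝ) {γ : Type*} [Fintype γ] (V : Ω → γ) (g : γ → ℝ) :
    ∑ v, pr μ (fun ω => V ω = v) * g v = ∑ ω, μ ω * g (V ω) := by
  unfold pr
  simp_rw [Finset.sum_mul]
  rw [Finset.sum_comm]
  refine Finset.sum_congr rfl fun ω _ => ?_
  simp

lemma pr_true (μ : Ω → ℝ) : pr μ (fun _ => True) = ∑ ω, μ ω := by simp [pr]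

variable {α β γ' : Type*} [Fintype α] [Fintype β] [Fintype γ']
  [DecidableEq α] [DecidableEq β] [DecidableEq γ']
  (μ : Ω → ℝ) (fA : Ω → α) (fB : Ω → β) (fC : Ω → γ')

lemma jointP_eq_pr (a : α) (b : β) (c : γ') :
    jointP μ fA fB fC a b c = pr μ (fun ω => fA ω = a ∧ fB ω = b ∧ fC ω = c) :=
  Finset.sum_congr rfl fun ω _ => by congr

lemma margB (a : α) (c : γ') :
    ∑ b, jointP μ fA fB fC a b c = pr μ (fun ω => fA ω = a ∧ fC ω = c) := by
  calc ∑ b, jointP μ fA fB fC a b c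
      = ∑ b, pr μ (fun ω => (fA ω = a ∧ fC ω = c) ∧ fB ω = b) :=
        Finset.sum_congr rfl fun b _ => by
          rw [jointP_eq_pr]; exact pr_congr μ fun ω => by tauto
    _ = pr μ (fun ω => fA ω = a ∧ fC ω = c) := pr_fiber_sum μ fB _

lemma margA (b : β) (c : γ') :
    ∑ a, jointP μ fA fB fC a b c = pr μ (fun ω => fB ω = b ∧ fC ω = c) := by
  calc ∑ a, jointP μ fA fB fC a b c
      = ∑ a, pr μ (fun ω => (fB ω = b ∧ fC ω = c) ∧ fA ω = a) :=
        Finset.sum_congr rfl fun a _ => by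
          rw [jointP_eq_pr]; exact pr_congr μ fun ω => by tauto
    _ = pr μ (fun ω => fB ω = b ∧ fC ω = c) := pr_fiber_sum μ fA _

lemma margAB (c : γ') :
    ∑ a, ∑ b, jointP μ fA fB fC a b c = pr μ (fun ω => fC ω = c) := by
  calc ∑ a, ∑ b, jointP μ fA fB fC a b c
      = ∑ a, pr μ (fun ω => (fC ω = c) ∧ fA ω = a) :=
        Finset.sum_congr rfl fun a _ => by
          rw [margB]; exact pr_congr μ fun ω => by tauto
    _ = pr μ (fun ω => fC ω = c) := pr_fiber_sum μ fA _

lemma sum_fiber3 (g : α → β → γ' → ℝ) :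
    ∑ a, ∑ b, ∑ c, pr μ (fun ω => fA ω = a ∧ fB ω = b ∧ fC ω = c) * g a b c
      = ∑ ω, μ ω * g (fA ω) (fB ω) (fC ω) := by
  rw [← sum_fiber μ (fun ω => (fA ω, fB ω, fC ω)) (fun v => g v.1 v.2.1 v.2.2)]
  rw [Fintype.sum_prod_type]
  refine Finset.sum_congr rfl fun a _ => ?_
  rw [Fintype.sum_prod_type]
  refine Finset.sum_congr rfl fun b _ => ?_
  refine Finset.sum_congr rfl fun c _ => ?_
  congr 1
  exact pr_congr μ fun ω => by simp [Prod.ext_iff]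

lemma cmi_eq : cmi μ fA fB fC = ∑ ω, μ ω * Real.logb 2
    (pr μ (fun ω' => fA ω' = fA ω ∧ fB ω' = fB ω ∧ fC ω' = fC ω) *
      pr μ (fun ω' => fC ω' = fC ω) /
      (pr μ (fun ω' => fA ω' = fA ω ∧ fC ω' = fC ω) *
        pr μ (fun ω' => fB ω' = fB ω ∧ fC ω' = fC ω))) := by
  unfold cmi
  simp_rw [margAB, margB, margA, jointP_eq_pr]
  exact sum_fiber3 μ fA fB fC _

end Aux

lemma logb_quot_expand {x y z w : ℝ} (hx : 0 < x) (hy : 0 < y) (hz : 0 < z) (hw : 0 < w) :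
    Real.logb 2 (x * y / (z * w)) =
      Real.logb 2 x + Real.logb 2 y - (Real.logb 2 z + Real.logb 2 w) := by
  rw [Real.logb_div (by positivity) (by positivity),
    Real.logb_mul hx.ne' hy.ne', Real.logb_mul hz.ne' hw.ne']

lemma core_ineq {Ω : Type*} [Fintype Ω] (μ : Ω → ℝ)
    (hμ0 : ∀ ω, 0 ≤ μ ω) (hμ1 : ∑ ω, μ ω = 1)
    (a1 b1 d1 a2 b2 d2 a3 b3 d3 cc : Ω → ℝ)
    (hle : ∀ ω, 0 < μ ω → μ ω ≤ a1 ω ∧ μ ω ≤ b1 ω ∧ μ ω ≤ d1 ω ∧ μ ω ≤ a2 ω ∧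
      μ ω ≤ b2 ω ∧ μ ω ≤ d2 ω ∧ μ ω ≤ a3 ω ∧ μ ω ≤ b3 ω ∧ μ ω ≤ d3 ω ∧ μ ω ≤ cc ω)
    (hC : ∑ ω, μ ω * (d1 ω * a2 ω * a3 ω / (a1 ω * (d2 ω * d3 ω))) ≤ 1)
    (hM : ∑ ω, μ ω * Real.logb 2 (b1 ω * cc ω / (b2 ω * b3 ω)) = 0) :
    ∑ ω, μ ω * Real.logb 2 (a2 ω * cc ω / (b2 ω * d2 ω)) +
      ∑ ω, μ ω * Real.logb 2 (a3 ω * cc ω / (b3 ω * d3 ω)) ≤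
      ∑ ω, μ ω * Real.logb 2 (a1 ω * cc ω / (b1 ω * d1 ω)) := by
  have hlog2 : (0:ℝ) < Real.log 2 := Real.log_pos one_lt_two
  have key : ∀ ω, μ ω * ((1 - d1 ω * a2 ω * a3 ω / (a1 ω * (d2 ω * d3 ω))) / Real.log 2)
      ≤ μ ω * Real.logb 2 (a1 ω * cc ω / (b1 ω * d1 ω))
        + μ ω * Real.logb 2 (b1 ω * cc ω / (b2 ω * b3 ω))
        - (μ ω * Real.logb 2 (a2 ω * cc ω / (b2 ω * d2 ω))
          + μ ω * Real.logb 2 (a3 ω * cc ω / (b3 ω * d3 ω))) := by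
    intro ω
    rcases eq_or_lt_of_le (hμ0 ω) with h0 | h0
    · simp [← h0]
    · obtain ⟨p1, p2, p3, p4, p5, p6, p7, p8, p9, p10⟩ := hle ω h0
      have A1 : 0 < a1 ω := lt_of_lt_of_le h0 p1
      have B1 : 0 < b1 ω := lt_of_lt_of_le h0 p2
      have D1 : 0 < d1 ω := lt_of_lt_of_le h0 p3
      have A2 : 0 < a2 ω := lt_of_lt_of_le h0 p4
      have B2 : 0 < b2 ω := lt_of_lt_of_le h0 p5
      have D2 : 0 < d2 ω := lt_of_lt_of_le h0 p6
      have A3 : 0 < a3 ω := lt_of_lt_of_le h0 p7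
      have B3 : 0 < b3 ω := lt_of_lt_of_le h0 p8
      have D3 : 0 < d3 ω := lt_of_lt_of_le h0 p9
      have CC : 0 < cc ω := lt_of_lt_of_le h0 p10
      set T : ℝ := a1 ω * (d2 ω * d3 ω) / (d1 ω * (a2 ω * a3 ω)) with hTdef
      have hT : 0 < T := by positivity
      have hlogT :
          Real.logb 2 (a1 ω * cc ω / (b1 ω * d1 ω))
            + Real.logb 2 (b1 ω * cc ω / (b2 ω * b3 ω))
            - (Real.logb 2 (a2 ω * cc ω / (b2 ω * d2 ω))
              + Real.logb 2 (a3 ω * cc ω / (b3 ω * d3 ω))) = Real.logb 2 T := by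
        rw [hTdef, logb_quot_expand A1 CC B1 D1, logb_quot_expand B1 CC B2 B3,
          logb_quot_expand A2 CC B2 D2, logb_quot_expand A3 CC B3 D3,
          logb_quot_expand A1 (by positivity : (0:ℝ) < d2 ω * d3 ω) D1
            (by positivity : (0:ℝ) < a2 ω * a3 ω),
          Real.logb_mul D2.ne' D3.ne', Real.logb_mul A2.ne' A3.ne']
        ring
      have hTinv : T⁻¹ = d1 ω * a2 ω * a3 ω / (a1 ω * (d2 ω * d3 ω)) := by
        rw [hTdef, inv_div]
        congr 1
        ring
      have hlb : (1 - T⁻¹) / Real.log 2 ≤ Real.logb 2 T := by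
        rw [Real.logb]
        have h1 : 1 - T⁻¹ ≤ Real.log T := by
          have := Real.log_le_sub_one_of_pos (inv_pos.2 hT)
          rw [Real.log_inv] at this
          linarith
        gcongr
      calc μ ω * ((1 - d1 ω * a2 ω * a3 ω / (a1 ω * (d2 ω * d3 ω))) / Real.log 2)
          = μ ω * ((1 - T⁻¹) / Real.log 2) := by rw [hTinv]
        _ ≤ μ ω * Real.logb 2 T := mul_le_mul_of_nonneg_left hlb h0.le
        _ = _ := by rw [← hlogT]; ring
  have step := Finset.sum_le_sum (fun ω (_ : ω ∈ Finset.univ) => key ω)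
  have hL : (0:ℝ) ≤ ∑ ω, μ ω * ((1 - d1 ω * a2 ω * a3 ω / (a1 ω * (d2 ω * d3 ω))) / Real.log 2) := by
    have e : ∑ ω, μ ω * ((1 - d1 ω * a2 ω * a3 ω / (a1 ω * (d2 ω * d3 ω))) / Real.log 2)
        = ((∑ ω, μ ω) - ∑ ω, μ ω * (d1 ω * a2 ω * a3 ω / (a1 ω * (d2 ω * d3 ω)))) / Real.log 2 := by
      rw [← Finset.sum_sub_distrib, Finset.sum_div]
      exact Finset.sum_congr rfl fun ω _ => by ring
    rw [e, hμ1]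
    apply div_nonneg _ hlog2.le
    linarith
  have hR : ∑ ω, (μ ω * Real.logb 2 (a1 ω * cc ω / (b1 ω * d1 ω))
        + μ ω * Real.logb 2 (b1 ω * cc ω / (b2 ω * b3 ω))
        - (μ ω * Real.logb 2 (a2 ω * cc ω / (b2 ω * d2 ω))
          + μ ω * Real.logb 2 (a3 ω * cc ω / (b3 ω * d3 ω))))
      = ∑ ω, μ ω * Real.logb 2 (a1 ω * cc ω / (b1 ω * d1 ω))
        + ∑ ω, μ ω * Real.logb 2 (b1 ω * cc ω / (b2 ω * b3 ω))
        - (∑ ω, μ ω * Real.logb 2 (a2 ω * cc ω / (b2 ω * d2 ω))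
          + ∑ ω, μ ω * Real.logb 2 (a3 ω * cc ω / (b3 ω * d3 ω))) := by
    rw [Finset.sum_sub_distrib, Finset.sum_add_distrib, Finset.sum_add_distrib]
  rw [hR] at step
  linarith [le_trans hL step]

lemma mul_div_cancel_bound (q n d : ℝ) (hq : 0 ≤ q) (hn : 0 ≤ n) (hd : 0 ≤ d) :
    q * (n / (q * d)) ≤ n / d := by
  rcases hq.eq_or_lt with h | h
  · rw [← h]; simpa using div_nonneg hn hd
  · rw [mul_div_assoc', mul_div_mul_left n d h.ne']

lemma div_mul_le_self' (x d : ℝ) (hx : 0 ≤ x) : x / d * d ≤ x := by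
  rcases eq_or_ne d 0 with h | h
  · simp [h, hx]
  · rw [div_mul_cancel₀ _ h]

lemma counting {Ω A1 A2 B H1 H2 Sh : Type*} [Fintype Ω]
    [Fintype A1] [Fintype A2] [Fintype B] [Fintype H1] [Fintype H2] [Fintype Sh]
    (μ : Ω → ℝ) (hμ0 : ∀ ω, 0 ≤ μ ω) (hμ1 : ∑ ω, μ ω = 1)
    (X1 : Ω → A1) (X2 : Ω → A2) (Y : Ω → B)
    (X1h : Ω → H1) (X2h : Ω → H2) (Sh' : Ω → Sh) :
    ∑ ω, μ ω *
      (pr μ (fun ω' => X1h ω' = X1h ω ∧ X2h ω' = X2h ω ∧ Sh' ω' = Sh' ω ∧ Y ω' = Y ω)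
        * pr μ (fun ω' => X1 ω' = X1 ω ∧ X1h ω' = X1h ω ∧ Sh' ω' = Sh' ω ∧ Y ω' = Y ω)
        * pr μ (fun ω' => X2 ω' = X2 ω ∧ X2h ω' = X2h ω ∧ Y ω' = Y ω)
        / (pr μ (fun ω' => X1h ω' = X1h ω ∧ X2h ω' = X2h ω ∧ Sh' ω' = Sh' ω ∧ Y ω' = Y ω
              ∧ X1 ω' = X1 ω ∧ X2 ω' = X2 ω)
          * (pr μ (fun ω' => X1h ω' = X1h ω ∧ Sh' ω' = Sh' ω ∧ Y ω' = Y ω)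
            * pr μ (fun ω' => X2h ω' = X2h ω ∧ Y ω' = Y ω)))) ≤ 1 := by
  classical
  have key : ∑ ω, μ ω *
      (pr μ (fun ω' => X1h ω' = X1h ω ∧ X2h ω' = X2h ω ∧ Sh' ω' = Sh' ω ∧ Y ω' = Y ω)
        * pr μ (fun ω' => X1 ω' = X1 ω ∧ X1h ω' = X1h ω ∧ Sh' ω' = Sh' ω ∧ Y ω' = Y ω)
        * pr μ (fun ω' => X2 ω' = X2 ω ∧ X2h ω' = X2h ω ∧ Y ω' = Y ω)
        / (pr μ (fun ω' => X1h ω' = X1h ω ∧ X2h ω' = X2h ω ∧ Sh' ω' = Sh' ω ∧ Y ω' = Y ω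
              ∧ X1 ω' = X1 ω ∧ X2 ω' = X2 ω)
          * (pr μ (fun ω' => X1h ω' = X1h ω ∧ Sh' ω' = Sh' ω ∧ Y ω' = Y ω)
            * pr μ (fun ω' => X2h ω' = X2h ω ∧ Y ω' = Y ω))))
      = ∑ v : H1 × H2 × Sh × B × A1 × A2,
          pr μ (fun ω => (X1h ω, X2h ω, Sh' ω, Y ω, X1 ω, X2 ω) = v) *
          (pr μ (fun ω => X1h ω = v.1 ∧ X2h ω = v.2.1 ∧ Sh' ω = v.2.2.1 ∧ Y ω = v.2.2.2.1)
            * pr μ (fun ω => X1 ω = v.2.2.2.2.1 ∧ X1h ω = v.1 ∧ Sh' ω = v.2.2.1 ∧ Y ω = v.2.2.2.1)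
            * pr μ (fun ω => X2 ω = v.2.2.2.2.2 ∧ X2h ω = v.2.1 ∧ Y ω = v.2.2.2.1)
            / (pr μ (fun ω => (X1h ω, X2h ω, Sh' ω, Y ω, X1 ω, X2 ω) = v)
              * (pr μ (fun ω => X1h ω = v.1 ∧ Sh' ω = v.2.2.1 ∧ Y ω = v.2.2.2.1)
                * pr μ (fun ω => X2h ω = v.2.1 ∧ Y ω = v.2.2.2.1)))) := by
    rw [sum_fiber μ (fun ω => (X1h ω, X2h ω, Sh' ω, Y ω, X1 ω, X2 ω))]
    refine Finset.sum_congr rfl fun ω _ => ?_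
    have h := pr_congr μ (E := fun ω' => (X1h ω', X2h ω', Sh' ω', Y ω', X1 ω', X2 ω')
        = (X1h ω, X2h ω, Sh' ω, Y ω, X1 ω, X2 ω))
      (F := fun ω' => X1h ω' = X1h ω ∧ X2h ω' = X2h ω ∧ Sh' ω' = Sh' ω ∧ Y ω' = Y ω
        ∧ X1 ω' = X1 ω ∧ X2 ω' = X2 ω) (fun ω' => by simp [Prod.ext_iff])
    simp only [h]
  rw [key]
  have bound : ∀ v : H1 × H2 × Sh × B × A1 × A2,
      pr μ (fun ω => (X1h ω, X2h ω, Sh' ω, Y ω, X1 ω, X2 ω) = v) *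
      (pr μ (fun ω => X1h ω = v.1 ∧ X2h ω = v.2.1 ∧ Sh' ω = v.2.2.1 ∧ Y ω = v.2.2.2.1)
        * pr μ (fun ω => X1 ω = v.2.2.2.2.1 ∧ X1h ω = v.1 ∧ Sh' ω = v.2.2.1 ∧ Y ω = v.2.2.2.1)
        * pr μ (fun ω => X2 ω = v.2.2.2.2.2 ∧ X2h ω = v.2.1 ∧ Y ω = v.2.2.2.1)
        / (pr μ (fun ω => (X1h ω, X2h ω, Sh' ω, Y ω, X1 ω, X2 ω) = v)
          * (pr μ (fun ω => X1h ω = v.1 ∧ Sh' ω = v.2.2.1 ∧ Y ω = v.2.2.2.1)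
            * pr μ (fun ω => X2h ω = v.2.1 ∧ Y ω = v.2.2.2.1))))
      ≤ pr μ (fun ω => X1h ω = v.1 ∧ X2h ω = v.2.1 ∧ Sh' ω = v.2.2.1 ∧ Y ω = v.2.2.2.1)
        * pr μ (fun ω => X1 ω = v.2.2.2.2.1 ∧ X1h ω = v.1 ∧ Sh' ω = v.2.2.1 ∧ Y ω = v.2.2.2.1)
        * pr μ (fun ω => X2 ω = v.2.2.2.2.2 ∧ X2h ω = v.2.1 ∧ Y ω = v.2.2.2.1)
        / (pr μ (fun ω => X1h ω = v.1 ∧ Sh' ω = v.2.2.1 ∧ Y ω = v.2.2.2.1)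
          * pr μ (fun ω => X2h ω = v.2.1 ∧ Y ω = v.2.2.2.1)) := fun v =>
    mul_div_cancel_bound _ _ _ (pr_nonneg μ hμ0 _)
      (mul_nonneg (mul_nonneg (pr_nonneg μ hμ0 _) (pr_nonneg μ hμ0 _)) (pr_nonneg μ hμ0 _))
      (mul_nonneg (pr_nonneg μ hμ0 _) (pr_nonneg μ hμ0 _))
  refine le_trans (Finset.sum_le_sum fun v _ => bound v) ?_
  -- expand the product sum into iterated sums
  rw [Fintype.sum_prod_type]
  have inner_bound : ∀ (h1 : H1) (h2 : H2) (s : Sh) (y : B),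
      (∑ x1, ∑ x2,
        pr μ (fun ω => X1h ω = h1 ∧ X2h ω = h2 ∧ Sh' ω = s ∧ Y ω = y)
          * pr μ (fun ω => X1 ω = x1 ∧ X1h ω = h1 ∧ Sh' ω = s ∧ Y ω = y)
          * pr μ (fun ω => X2 ω = x2 ∧ X2h ω = h2 ∧ Y ω = y)
          / (pr μ (fun ω => X1h ω = h1 ∧ Sh' ω = s ∧ Y ω = y)
            * pr μ (fun ω => X2h ω = h2 ∧ Y ω = y)))
      ≤ pr μ (fun ω => X1h ω = h1 ∧ X2h ω = h2 ∧ Sh' ω = s ∧ Y ω = y) := by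
    intro h1 h2 s y
    have hsum1 : ∑ x1, pr μ (fun ω => X1 ω = x1 ∧ X1h ω = h1 ∧ Sh' ω = s ∧ Y ω = y)
        = pr μ (fun ω => X1h ω = h1 ∧ Sh' ω = s ∧ Y ω = y) := by
      rw [← pr_fiber_sum μ X1 (fun ω => X1h ω = h1 ∧ Sh' ω = s ∧ Y ω = y)]
      exact Finset.sum_congr rfl fun x1 _ => pr_congr μ fun ω => by tauto
    have hsum2 : ∑ x2, pr μ (fun ω => X2 ω = x2 ∧ X2h ω = h2 ∧ Y ω = y)
        = pr μ (fun ω => X2h ω = h2 ∧ Y ω = y) := by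
      rw [← pr_fiber_sum μ X2 (fun ω => X2h ω = h2 ∧ Y ω = y)]
      exact Finset.sum_congr rfl fun x2 _ => pr_congr μ fun ω => by tauto
    have expand : (∑ x1, ∑ x2,
        pr μ (fun ω => X1h ω = h1 ∧ X2h ω = h2 ∧ Sh' ω = s ∧ Y ω = y)
          * pr μ (fun ω => X1 ω = x1 ∧ X1h ω = h1 ∧ Sh' ω = s ∧ Y ω = y)
          * pr μ (fun ω => X2 ω = x2 ∧ X2h ω = h2 ∧ Y ω = y)
          / (pr μ (fun ω => X1h ω = h1 ∧ Sh' ω = s ∧ Y ω = y)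
            * pr μ (fun ω => X2h ω = h2 ∧ Y ω = y)))
        = pr μ (fun ω => X1h ω = h1 ∧ X2h ω = h2 ∧ Sh' ω = s ∧ Y ω = y)
          / (pr μ (fun ω => X1h ω = h1 ∧ Sh' ω = s ∧ Y ω = y)
            * pr μ (fun ω => X2h ω = h2 ∧ Y ω = y))
          * ((∑ x1, pr μ (fun ω => X1 ω = x1 ∧ X1h ω = h1 ∧ Sh' ω = s ∧ Y ω = y))
            * (∑ x2, pr μ (fun ω => X2 ω = x2 ∧ X2h ω = h2 ∧ Y ω = y))) := by
      rw [Finset.sum_mul_sum, Finset.mul_sum]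
      refine Finset.sum_congr rfl fun x1 _ => ?_
      rw [Finset.mul_sum]
      refine Finset.sum_congr rfl fun x2 _ => ?_
      ring
    rw [expand, hsum1, hsum2]
    exact div_mul_le_self' _ _ (pr_nonneg μ hμ0 _)
  have total : ∑ h1 : H1, ∑ h2 : H2, ∑ s : Sh, ∑ y : B,
      pr μ (fun ω => X1h ω = h1 ∧ X2h ω = h2 ∧ Sh' ω = s ∧ Y ω = y) = 1 := by
    have e3 : ∀ (h1 : H1) (h2 : H2) (s : Sh), ∑ y : B,
        pr μ (fun ω => X1h ω = h1 ∧ X2h ω = h2 ∧ Sh' ω = s ∧ Y ω = y)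
        = pr μ (fun ω => X1h ω = h1 ∧ X2h ω = h2 ∧ Sh' ω = s) := by
      intro h1 h2 s
      rw [← pr_fiber_sum μ Y (fun ω => X1h ω = h1 ∧ X2h ω = h2 ∧ Sh' ω = s)]
      exact Finset.sum_congr rfl fun y _ => pr_congr μ fun ω => by tauto
    have e2 : ∀ (h1 : H1) (h2 : H2), ∑ s : Sh,
        pr μ (fun ω => X1h ω = h1 ∧ X2h ω = h2 ∧ Sh' ω = s)
        = pr μ (fun ω => X1h ω = h1 ∧ X2h ω = h2) := by
      intro h1 h2
      rw [← pr_fiber_sum μ Sh' (fun ω => X1h ω = h1 ∧ X2h ω = h2)]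
      exact Finset.sum_congr rfl fun s _ => pr_congr μ fun ω => by tauto
    have e1 : ∀ (h1 : H1), ∑ h2 : H2,
        pr μ (fun ω => X1h ω = h1 ∧ X2h ω = h2)
        = pr μ (fun ω => X1h ω = h1) := by
      intro h1
      rw [← pr_fiber_sum μ X2h (fun ω => X1h ω = h1)]
    have e0 : ∑ h1 : H1, pr μ (fun ω => X1h ω = h1) = 1 := by
      calc ∑ h1 : H1, pr μ (fun ω => X1h ω = h1)
          = ∑ h1 : H1, pr μ (fun ω => True ∧ X1h ω = h1) :=
            Finset.sum_congr rfl fun h1 _ => pr_congr μ fun ω => by tauto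
        _ = pr μ (fun _ => True) := pr_fiber_sum μ X1h _
        _ = 1 := (pr_true μ).trans hμ1
    simp only [e3, e2, e1]
    exact e0
  refine le_trans ?_ (le_of_eq total)
  refine Finset.sum_le_sum fun h1 _ => ?_
  rw [Fintype.sum_prod_type]
  refine Finset.sum_le_sum fun h2 _ => ?_
  rw [Fintype.sum_prod_type]
  refine Finset.sum_le_sum fun s _ => ?_
  rw [Fintype.sum_prod_type]
  refine Finset.sum_le_sum fun y _ => ?_
  rw [Fintype.sum_prod_type]
  exact inner_bound h1 h2 s y

/-- if `X1 − Y − X2` is a Markov chain (i.e. `I(X1; X2 | Y) = 0`), then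
`I(X1, X2; X̂1, X̂2, Ŝ | Y) ≥ I(X1; X̂1, Ŝ | Y) + I(X2; X̂2 | Y)`. -/
theorem cmi_superadditive_of_markov
    {Ω A1 A2 B H1 H2 Sh : Type*} [Fintype Ω]
    [Fintype A1] [Fintype A2] [Fintype B] [Fintype H1] [Fintype H2] [Fintype Sh]
    [DecidableEq A1] [DecidableEq A2] [DecidableEq B]
    [DecidableEq H1] [DecidableEq H2] [DecidableEq Sh]
    (μ : Ω → ℝ) (hμ0 : ∀ ω, 0 ≤ μ ω) (hμ1 : ∑ ω, μ ω = 1)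
    (X1 : Ω → A1) (X2 : Ω → A2) (Y : Ω → B)
    (X1h : Ω → H1) (X2h : Ω → H2) (Sh' : Ω → Sh)
    (hmarkov : cmi μ X1 X2 Y = 0) :
    cmi μ (fun ω => (X1 ω, X2 ω)) (fun ω => (X1h ω, X2h ω, Sh' ω)) Y ≥
      cmi μ X1 (fun ω => (X1h ω, Sh' ω)) Y + cmi μ X2 X2h Y := by
  classical
  rw [ge_iff_le, cmi_eq μ (fun ω => (X1 ω, X2 ω)) (fun ω => (X1h ω, X2h ω, Sh' ω)) Y,
    cmi_eq μ X1 (fun ω => (X1h ω, Sh' ω)) Y, cmi_eq μ X2 X2h Y]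
  rw [cmi_eq μ X1 X2 Y] at hmarkov
  have eA : ∀ ω : Ω, pr μ (fun ω' => (X1 ω', X2 ω') = (X1 ω, X2 ω) ∧
        (X1h ω', X2h ω', Sh' ω') = (X1h ω, X2h ω, Sh' ω) ∧ Y ω' = Y ω)
      = pr μ (fun ω' => X1h ω' = X1h ω ∧ X2h ω' = X2h ω ∧ Sh' ω' = Sh' ω ∧ Y ω' = Y ω
          ∧ X1 ω' = X1 ω ∧ X2 ω' = X2 ω) :=
    fun ω => pr_congr μ fun ω' => by simp only [Prod.mk.injEq]; tauto
  have eB : ∀ ω : Ω, pr μ (fun ω' => (X1 ω', X2 ω') = (X1 ω, X2 ω) ∧ Y ω' = Y ω)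
      = pr μ (fun ω' => X1 ω' = X1 ω ∧ X2 ω' = X2 ω ∧ Y ω' = Y ω) :=
    fun ω => pr_congr μ fun ω' => by simp only [Prod.mk.injEq]; tauto
  have eC : ∀ ω : Ω, pr μ (fun ω' => (X1h ω', X2h ω', Sh' ω') = (X1h ω, X2h ω, Sh' ω)
        ∧ Y ω' = Y ω)
      = pr μ (fun ω' => X1h ω' = X1h ω ∧ X2h ω' = X2h ω ∧ Sh' ω' = Sh' ω ∧ Y ω' = Y ω) :=
    fun ω => pr_congr μ fun ω' => by simp only [Prod.mk.injEq]; tauto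
  have eD : ∀ ω : Ω, pr μ (fun ω' => X1 ω' = X1 ω ∧ (X1h ω', Sh' ω') = (X1h ω, Sh' ω)
        ∧ Y ω' = Y ω)
      = pr μ (fun ω' => X1 ω' = X1 ω ∧ X1h ω' = X1h ω ∧ Sh' ω' = Sh' ω ∧ Y ω' = Y ω) :=
    fun ω => pr_congr μ fun ω' => by simp only [Prod.mk.injEq]; tauto
  have eE : ∀ ω : Ω, pr μ (fun ω' => (X1h ω', Sh' ω') = (X1h ω, Sh' ω) ∧ Y ω' = Y ω)
      = pr μ (fun ω' => X1h ω' = X1h ω ∧ Sh' ω' = Sh' ω ∧ Y ω' = Y ω) :=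
    fun ω => pr_congr μ fun ω' => by simp only [Prod.mk.injEq]; tauto
  simp only [eA, eB, eC, eD, eE]
  refine core_ineq μ hμ0 hμ1
    (fun ω => pr μ (fun ω' => X1h ω' = X1h ω ∧ X2h ω' = X2h ω ∧ Sh' ω' = Sh' ω ∧ Y ω' = Y ω
      ∧ X1 ω' = X1 ω ∧ X2 ω' = X2 ω))
    (fun ω => pr μ (fun ω' => X1 ω' = X1 ω ∧ X2 ω' = X2 ω ∧ Y ω' = Y ω))
    (fun ω => pr μ (fun ω' => X1h ω' = X1h ω ∧ X2h ω' = X2h ω ∧ Sh' ω' = Sh' ω ∧ Y ω' = Y ω))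
    (fun ω => pr μ (fun ω' => X1 ω' = X1 ω ∧ X1h ω' = X1h ω ∧ Sh' ω' = Sh' ω ∧ Y ω' = Y ω))
    (fun ω => pr μ (fun ω' => X1 ω' = X1 ω ∧ Y ω' = Y ω))
    (fun ω => pr μ (fun ω' => X1h ω' = X1h ω ∧ Sh' ω' = Sh' ω ∧ Y ω' = Y ω))
    (fun ω => pr μ (fun ω' => X2 ω' = X2 ω ∧ X2h ω' = X2h ω ∧ Y ω' = Y ω))
    (fun ω => pr μ (fun ω' => X2 ω' = X2 ω ∧ Y ω' = Y ω))
    (fun ω => pr μ (fun ω' => X2h ω' = X2h ω ∧ Y ω' = Y ω))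
    (fun ω => pr μ (fun ω' => Y ω' = Y ω))
    (fun ω _ => ⟨le_pr μ hμ0 ω ⟨rfl, rfl, rfl, rfl, rfl, rfl⟩,
      le_pr μ hμ0 ω ⟨rfl, rfl, rfl⟩, le_pr μ hμ0 ω ⟨rfl, rfl, rfl, rfl⟩,
      le_pr μ hμ0 ω ⟨rfl, rfl, rfl, rfl⟩, le_pr μ hμ0 ω ⟨rfl, rfl⟩,
      le_pr μ hμ0 ω ⟨rfl, rfl, rfl⟩, le_pr μ hμ0 ω ⟨rfl, rfl, rfl⟩,
      le_pr μ hμ0 ω ⟨rfl, rfl⟩, le_pr μ hμ0 ω ⟨rfl, rfl⟩, le_pr μ hμ0 ω rfl⟩)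
    (counting μ hμ0 hμ1 X1 X2 Y X1h X2h Sh') hmarkov
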